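/- arXiv:1012.1222 — 8 statements merged into one kernel-verified Lean document; each statement's English description precedes it below -/
import Mathlib

section
/- Any non-empty subshift of finite type in Q^(Z^2) (Q a finite alphabet) contains a quasi-periodic configuration, i.e., a configuration c such that every finite pattern appearing in c appears in every sufficiently large square pattern of c. -/
/-- A configuration of the discrete plane. -/
def Config (Q : Type*) := ℤ × ℤ → Q

/-- A pattern: a finite domain together with colors (only values on `dom` matter). -/
structure Pattern (Q : Type*) where
  dom : Finset (ℤ × ℤ)
  val : ℤ × ℤ → Q

/-- The square domain `[-n,n]^2`. -/
noncomputable def square (n : ℕ) : Finset (ℤ × ℤ) := Finset.Icc (-(n:ℤ), -(n:ℤ)) ((n:ℤ), (n:ℤ))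

/-- The rectangle `[a,b] × [c,d]`. -/
noncomputable def rect (a b c d : ℤ) : Finset (ℤ × ℤ) := Finset.Icc (a, c) (b, d)

/-- The pattern of `c` with domain `D`, shifted by `v`. -/
def subPattern {Q : Type*} (c : Config Q) (v : ℤ × ℤ) (D : Finset (ℤ × ℤ)) : Pattern Q :=
  ⟨D, fun x => c (v + x)⟩

/-- `P` appears in the configuration `c`. -/
def Pattern.appearsIn {Q : Type*} (P : Pattern Q) (c : Config Q) : Prop :=
  ∃ v : ℤ × ℤ, ∀ x ∈ P.dom, c (v + x) = P.val x

/-- `P` appears in the pattern `M`. -/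
def Pattern.appearsInPat {Q : Type*} (P M : Pattern Q) : Prop :=
  ∃ v : ℤ × ℤ, ∀ x ∈ P.dom, v + x ∈ M.dom ∧ M.val (v + x) = P.val x

/-- `c` is a valid tiling for the set of forbidden patterns `F`. -/
def ValidFor {Q : Type*} (F : Set (Pattern Q)) (c : Config Q) : Prop :=
  ∀ P ∈ F, ¬ P.appearsIn c

/-- `c` is quasi-periodic: every pattern appearing in `c` appears in every
sufficiently large square pattern of `c`. -/
def QuasiPeriodic {Q : Type*} (c : Config Q) : Prop :=
  ∀ P : Pattern Q, P.appearsIn c →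
    ∃ n : ℕ, ∀ v : ℤ × ℤ, P.appearsInPat (subPattern c v (square n))

/-!
The space `Q^(ℤ²)` is compact, so by Zorn's lemma every non-empty subshift contains a minimal
non-empty subshift `M`. Every `c ∈ M` is quasi-periodic: if a pattern `P` of `c` were missing
from some `d ∈ M`, the elements of `M` avoiding `P` would form a smaller non-empty subshift. So
`P` appears in every element of `M`, the open sets "`P` appears inside `[-n,n]²`" cover the
compact set `M`, and a single `n` works for all of `M`, in particular for every shift of `c`.
-/

variable {Q : Type*}

def Config.shift (v : ℤ × ℤ) (c : Config Q) : Config Q := fun x => c (v + x)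

def Pattern.occursAt (P : Pattern Q) (c : Config Q) (v : ℤ × ℤ) : Prop :=
  ∀ x ∈ P.dom, c (v + x) = P.val x

def Pattern.appearsInSquare (P : Pattern Q) (n : ℕ) (c : Config Q) : Prop :=
  ∃ w : ℤ × ℤ, ∀ x ∈ P.dom, w + x ∈ square n ∧ c (w + x) = P.val x

theorem Pattern.appearsIn_of_appearsIn_shift {P : Pattern Q} {c : Config Q} {v : ℤ × ℤ}
    (h : P.appearsIn (c.shift v)) : P.appearsIn c := by
  obtain ⟨w, hw⟩ := h
  exact ⟨v + w, fun x hx => by simpa only [Config.shift, add_assoc] using hw x hx⟩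

theorem square_mono : Monotone square := fun _ _ h =>
  Finset.Icc_subset_Icc (by simp [Prod.le_def, h]) (by simp [Prod.le_def, h])

theorem exists_subset_square (D : Finset (ℤ × ℤ)) : ∃ n, D ⊆ square n := by
  refine ⟨D.sup fun x => x.1.natAbs ⊔ x.2.natAbs, fun x hx => ?_⟩
  have hx : x.1.natAbs ⊔ x.2.natAbs ≤ D.sup fun x => x.1.natAbs ⊔ x.2.natAbs :=
    Finset.le_sup (f := fun x => x.1.natAbs ⊔ x.2.natAbs) hx
  simp only [square, Finset.mem_Icc, Prod.le_def, sup_le_iff] at hx ⊢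
  omega

theorem Pattern.exists_appearsInSquare {P : Pattern Q} {c : Config Q} (h : P.appearsIn c) :
    ∃ n, P.appearsInSquare n c := by
  obtain ⟨w, hw⟩ := h
  obtain ⟨n, hn⟩ := exists_subset_square (P.dom.image (w + ·))
  exact ⟨n, w, fun x hx => ⟨hn (Finset.mem_image_of_mem _ hx), hw x hx⟩⟩

structure IsSubshift_s0 [TopologicalSpace Q] (X : Set (ℤ × ℤ → Q)) : Prop where
  isClosed : IsClosed X
  shift_mem : ∀ c ∈ X, ∀ v, Config.shift v c ∈ X

section Topology

variable [TopologicalSpace Q]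

theorem isSubshift_iInter {ι : Sort*} {X : ι → Set (ℤ × ℤ → Q)} (hX : ∀ i, IsSubshift_s0 (X i)) :
    IsSubshift_s0 (⋂ i, X i) where
  isClosed := isClosed_iInter fun i => (hX i).isClosed
  shift_mem c hc v := Set.mem_iInter.2 fun i => (hX i).shift_mem c (Set.mem_iInter.1 hc i) v

theorem IsSubshift_s0.inter {X Y : Set (ℤ × ℤ → Q)} (hX : IsSubshift_s0 X) (hY : IsSubshift_s0 Y) :
    IsSubshift_s0 (X ∩ Y) where
  isClosed := hX.isClosed.inter hY.isClosed
  shift_mem c hc v := ⟨hX.shift_mem c hc.1 v, hY.shift_mem c hc.2 v⟩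

theorem exists_minimal_subshift_subset [CompactSpace Q] {X : Set (ℤ × ℤ → Q)}
    (hX : IsSubshift_s0 X) (hne : X.Nonempty) :
    ∃ M ⊆ X, Minimal (fun Y => Y.Nonempty ∧ IsSubshift_s0 Y) M := by
  refine zorn_superset_nonempty _ (fun C hCS hC hCne => ?_) X ⟨hne, hX⟩
  have : Nonempty C := hCne.to_subtype
  have hdir : DirectedOn (· ⊇ ·) C :=
    IsChain.directedOn (r := fun A B : Set (ℤ × ℤ → Q) => A ⊇ B) hC.symm
  refine ⟨⋂₀ C, ⟨?_, ?_⟩, fun Y hY => Set.sInter_subset_of_mem hY⟩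
  · exact IsCompact.nonempty_sInter_of_directed_nonempty_isCompact_isClosed hdir
      (fun Y hY => (hCS hY).1) (fun Y hY => (hCS hY).2.isClosed.isCompact)
      (fun Y hY => (hCS hY).2.isClosed)
  · rw [Set.sInter_eq_iInter]
    exact isSubshift_iInter fun Y => (hCS Y.2).2

variable [DiscreteTopology Q]

theorem isClopen_setOf_occursAt (P : Pattern Q) (v : ℤ × ℤ) :
    IsClopen {c : ℤ × ℤ → Q | P.occursAt c v} := by
  have h : {c : ℤ × ℤ → Q | P.occursAt c v}
      = ⋂ x ∈ P.dom, (fun c => c (v + x)) ⁻¹' {P.val x} := by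
    ext c; simp [Pattern.occursAt]
  rw [h]
  exact isClopen_biInter_finset fun x _ =>
    (isClopen_discrete {P.val x}).preimage (continuous_apply (v + x))

theorem isSubshift_setOf_not_appearsIn (P : Pattern Q) :
    IsSubshift_s0 {c : ℤ × ℤ → Q | ¬ P.appearsIn c} where
  isClosed := by
    have h : {c : ℤ × ℤ → Q | ¬ P.appearsIn c} = ⋂ v, {c : ℤ × ℤ → Q | P.occursAt c v}ᶜ := by
      ext c
      simp [Pattern.appearsIn, Pattern.occursAt]
    rw [h]
    exact isClosed_iInter fun v => (isClopen_setOf_occursAt P v).compl.isClosed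
  shift_mem _ hc _ hP := hc (Pattern.appearsIn_of_appearsIn_shift hP)

theorem isSubshift_setOf_validFor (F : Set (Pattern Q)) :
    IsSubshift_s0 {c : ℤ × ℤ → Q | ValidFor F c} := by
  have h : {c : ℤ × ℤ → Q | ValidFor F c} = ⋂ P ∈ F, {c : ℤ × ℤ → Q | ¬ P.appearsIn c} := by
    ext c
    simp [ValidFor]
  rw [h]
  exact isSubshift_iInter fun P => isSubshift_iInter fun _ => isSubshift_setOf_not_appearsIn P

theorem isOpen_setOf_appearsInSquare (P : Pattern Q) (n : ℕ) :
    IsOpen {c : ℤ × ℤ → Q | P.appearsInSquare n c} := by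
  have h : {c : ℤ × ℤ → Q | P.appearsInSquare n c}
      = ⋃ w ∈ {w | ∀ x ∈ P.dom, w + x ∈ square n}, {c : ℤ × ℤ → Q | P.occursAt c w} := by
    ext c
    simp [Pattern.appearsInSquare, Pattern.occursAt, forall_and]
  rw [h]
  exact isOpen_biUnion fun w _ => (isClopen_setOf_occursAt P w).isOpen

section MinimalSubshift

variable {M : Set (ℤ × ℤ → Q)} (hM : Minimal (fun Y => Y.Nonempty ∧ IsSubshift_s0 Y) M)
include hM

theorem Pattern.appearsIn_of_mem_minimal {P : Pattern Q} {c d : ℤ × ℤ → Q} (hc : c ∈ M)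
    (hP : P.appearsIn c) (hd : d ∈ M) : P.appearsIn d := by
  by_contra hdP
  have hsub : M ⊆ M ∩ {f | ¬ P.appearsIn f} :=
    hM.2 ⟨⟨d, hd, hdP⟩, hM.1.2.inter (isSubshift_setOf_not_appearsIn P)⟩ Set.inter_subset_left
  exact (hsub hc).2 hP

theorem Pattern.exists_appearsInSquare_of_minimal [CompactSpace Q] {P : Pattern Q}
    {c : ℤ × ℤ → Q} (hc : c ∈ M) (hP : P.appearsIn c) :
    ∃ n, ∀ d ∈ M, P.appearsInSquare n d := by
  have hcover : M ⊆ ⋃ n, {d | P.appearsInSquare n d} := fun d hd =>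
    Set.mem_iUnion.2 (Pattern.exists_appearsInSquare (P.appearsIn_of_mem_minimal hM hc hP hd))
  have hmono : Monotone fun n => {d : ℤ × ℤ → Q | P.appearsInSquare n d} :=
    fun m n hmn d ⟨w, hw⟩ => ⟨w, fun x hx => ⟨square_mono hmn (hw x hx).1, (hw x hx).2⟩⟩
  exact hM.1.2.isClosed.isCompact.elim_directed_cover _
    (isOpen_setOf_appearsInSquare P) hcover hmono.directed_le

theorem quasiPeriodic_of_mem_minimal [CompactSpace Q] {c : ℤ × ℤ → Q} (hc : c ∈ M) :
    QuasiPeriodic c := fun P hP => by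
  obtain ⟨n, hn⟩ := P.exists_appearsInSquare_of_minimal hM hc hP
  exact ⟨n, fun v => hn _ (hM.1.2.shift_mem c hc v)⟩

end MinimalSubshift

end Topology

theorem stmt0_general {Q : Type} [Fintype Q] (F : Set (Pattern Q))
    (hne : ∃ c : Config Q, ValidFor F c) :
    ∃ c : Config Q, ValidFor F c ∧ QuasiPeriodic c := by
  let : TopologicalSpace Q := ⊥
  have : DiscreteTopology Q := ⟨rfl⟩
  obtain ⟨M, hMX, hM⟩ := exists_minimal_subshift_subset (isSubshift_setOf_validFor F) hne
  obtain ⟨c, hc⟩ := hM.1.1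
  exact ⟨c, hMX hc, quasiPeriodic_of_mem_minimal hM hc⟩

theorem stmt0 {Q : Type} [Fintype Q] (F : Set (Pattern Q)) (hF : F.Finite)
    (hne : ∃ c : Config Q, ValidFor F c) :
    ∃ c : Config Q, ValidFor F c ∧ QuasiPeriodic c :=
  stmt0_general F hne
end

section
/- If a finite set of forbidden patterns F defines a tileset such that every tiling valid for F is quasi-periodic, then for every pattern P appearing in some valid tiling there exists an integer n such that in every valid tiling containing P, the pattern P appears in every square subpattern of the tiling with domain a translate of [-n,n]^2. -/
open Filter

def supNorm (p : ℤ × ℤ) : ℕ := max p.1.natAbs p.2.natAbs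

lemma mem_square_iff {x : ℤ × ℤ} {n : ℕ} : x ∈ square n ↔ supNorm x ≤ n := by
  simp only [square, supNorm, Finset.mem_Icc, Prod.le_def]
  omega

lemma supNorm_add_le (a b : ℤ × ℤ) : supNorm (a + b) ≤ supNorm a + supNorm b := by
  simp only [supNorm, Prod.fst_add, Prod.snd_add]
  omega

lemma supNorm_sub_le (a b : ℤ × ℤ) : supNorm (a - b) ≤ supNorm a + supNorm b := by
  simp only [supNorm, Prod.fst_sub, Prod.snd_sub]
  omega

lemma supNorm_sub_comm (a b : ℤ × ℤ) : supNorm (a - b) = supNorm (b - a) := by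
  simp only [supNorm, Prod.fst_sub, Prod.snd_sub]
  omega

lemma exists_supNorm_le_and_supNorm_sub_le (p : ℤ × ℤ) (s : ℕ) :
    ∃ q, supNorm q ≤ s ∧ supNorm (p - q) ≤ supNorm p - s :=
  ⟨(max (-s) (min s p.1), max (-s) (min s p.2)),
    by simp only [supNorm]; omega,
    by simp only [supNorm, Prod.fst_sub, Prod.snd_sub]; omega⟩

lemma Ultrafilter.exists_eventually_forall_finset_eq {ι α Q : Type*} [Finite Q]
    (U : Ultrafilter ι) (c : ι → α → Q) :
    ∃ e : α → Q, ∀ S : Finset α, ∀ᶠ i in U, ∀ x ∈ S, c i x = e x := by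
  have hpt : ∀ x, ∃ q, ∀ᶠ i in U, c i x = q := fun x => by
    obtain ⟨q, hq⟩ := (U.map (c · x)).eq_pure_of_finite
    exact ⟨q, show {q} ∈ U.map (c · x) by rw [hq]; exact Ultrafilter.mem_pure.2 rfl⟩
  choose e he using hpt
  exact ⟨e, fun S => (eventually_all_finset S).2 fun x _ => he x⟩

def Config.translate {Q : Type*} (c : Config Q) (t : ℤ × ℤ) : Config Q := fun x => c (t + x)

namespace Pattern

variable {Q : Type*} {P : Pattern Q} {c c' : Config Q}

def occursAt_s1 (P : Pattern Q) (c : Config Q) (z : ℤ × ℤ) : Prop :=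
  ∀ x ∈ P.dom, c (z + x) = P.val x

def radius (P : Pattern Q) : ℕ := P.dom.sup supNorm

lemma supNorm_le_radius {x : ℤ × ℤ} (hx : x ∈ P.dom) : supNorm x ≤ P.radius :=
  Finset.le_sup hx

lemma occursAt_s1.congr {z : ℤ × ℤ} (h : P.occursAt_s1 c z)
    (hcc' : ∀ x ∈ P.dom, c (z + x) = c' (z + x)) : P.occursAt_s1 c' z :=
  fun x hx => (hcc' x hx).symm.trans (h x hx)

lemma occursAt_translate {t y : ℤ × ℤ} :
    P.occursAt_s1 (c.translate t) y ↔ P.occursAt_s1 c (t + y) := by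
  simp only [occursAt_s1, Config.translate, add_assoc]

lemma occursAt_s1.appearsInPat_subPattern_square {v z : ℤ × ℤ} {n : ℕ} (hz : P.occursAt_s1 c z)
    (hn : supNorm (v - z) + P.radius ≤ n) : P.appearsInPat (subPattern c v (square n)) := by
  refine ⟨z - v, fun x hx => ⟨?_, ?_⟩⟩
  · show z - v + x ∈ square n
    have := supNorm_add_le (z - v) x
    have := supNorm_le_radius hx
    rw [mem_square_iff]
    rw [supNorm_sub_comm] at hn
    omega
  · show c (v + (z - v + x)) = P.val x
    rw [show v + (z - v + x) = z + x by abel]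
    exact hz x hx

lemma exists_occursAt_of_appearsInPat_subPattern_square {v : ℤ × ℤ} {m : ℕ}
    (hP : P.dom.Nonempty) (h : P.appearsInPat (subPattern c v (square m))) :
    ∃ u, supNorm u ≤ m + P.radius ∧ P.occursAt_s1 c (v + u) := by
  obtain ⟨u, hu⟩ := h
  obtain ⟨x₀, hx₀⟩ := hP
  refine ⟨u, ?_, fun x hx => by rw [add_assoc]; exact (hu x hx).2⟩
  have := mem_square_iff.1 (hu x₀ hx₀).1
  have := supNorm_le_radius hx₀
  have := add_sub_cancel_right u x₀ ▸ supNorm_sub_le (u + x₀) x₀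
  omega

lemma exists_occursAt_forall_supNorm_le (h : P.appearsIn c) (v : ℤ × ℤ) :
    ∃ z, P.occursAt_s1 c z ∧ ∀ y, P.occursAt_s1 c y → supNorm (v - z) ≤ supNorm (v - y) := by
  classical
  have hdist : ∃ r, ∃ z, P.occursAt_s1 c z ∧ supNorm (v - z) = r :=
    let ⟨z, hz⟩ := h
    ⟨_, z, hz, rfl⟩
  obtain ⟨z, hz, hzr⟩ := Nat.find_spec hdist
  exact ⟨z, hz, fun y hy => hzr ▸ Nat.find_min' hdist ⟨y, hy, rfl⟩⟩

end Pattern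

open Pattern

variable {Q : Type*} {F : Set (Pattern Q)}

lemma ValidFor.translate {c : Config Q} (h : ValidFor F c) (t : ℤ × ℤ) :
    ValidFor F (c.translate t) := by
  rintro P hP ⟨y, hy⟩
  exact h P hP ⟨t + y, occursAt_translate.1 hy⟩

lemma validFor_of_forall_finset {e : Config Q}
    (he : ∀ S : Finset (ℤ × ℤ), ∃ c, ValidFor F c ∧ ∀ x ∈ S, c x = e x) : ValidFor F e := by
  rintro P hP ⟨z, hz⟩
  obtain ⟨c, hc, hce⟩ := he (P.dom.image (z + ·))
  exact hc P hP ⟨z, occursAt_s1.congr hz fun x hx => (hce _ (Finset.mem_image_of_mem _ hx)).symm⟩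

theorem false_of_nearest_occurrences_escape [Finite Q]
    (hqp : ∀ c : Config Q, ValidFor F c → QuasiPeriodic c) {P : Pattern Q}
    (hP : P.dom.Nonempty) (e : ℕ → Config Q) (p : ℕ → ℤ × ℤ) (hval : ∀ n, ValidFor F (e n))
    (hocc : ∀ n, P.occursAt_s1 (e n) 0) (hp : ∀ n, n ≤ supNorm (p n))
    (hnear : ∀ n y, P.occursAt_s1 (e n) y → supNorm (p n) ≤ supNorm (p n - y)) : False := by
  set U : Ultrafilter ℕ := Ultrafilter.of atTop
  have hU : ∀ N : ℕ, ∀ᶠ n in U, N ≤ n := fun N => Ultrafilter.of_le atTop (eventually_ge_atTop N)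
  obtain ⟨E, hE⟩ := U.exists_eventually_forall_finset_eq e
  have hvalE : ValidFor F E := validFor_of_forall_finset fun S =>
    let ⟨n, hn⟩ := (hE S).exists
    ⟨e n, hval n, hn⟩
  have hoccE : P.occursAt_s1 E 0 := by
    obtain ⟨n, hn⟩ := (hE (P.dom.image (0 + ·))).exists
    exact (hocc n).congr fun x hx => hn _ (Finset.mem_image_of_mem _ hx)
  obtain ⟨m, hm⟩ := hqp E hvalE P ⟨0, hoccE⟩
  set k := P.radius
  set s := m + k + 1
  obtain ⟨n, hagree, hsn⟩ := ((hE (square (s + m + 2 * k))).and (hU s)).exists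
  obtain ⟨q, hq, hpq⟩ := exists_supNorm_le_and_supNorm_sub_le (p n) s
  obtain ⟨u, hu, hocc_qu⟩ := exists_occursAt_of_appearsInPat_subPattern_square hP (hm q)
  have hocc_n : P.occursAt_s1 (e n) (q + u) := hocc_qu.congr fun x hx => by
    refine (hagree _ (mem_square_iff.2 ?_)).symm
    have := supNorm_add_le (q + u) x
    have := supNorm_add_le q u
    have := supNorm_le_radius hx
    omega
  have hcloser := hnear n _ hocc_n
  have := hp n
  have := sub_sub (p n) q u ▸ supNorm_sub_le (p n - q) u
  omega

theorem exists_supNorm_sub_le_of_forall_quasiPeriodic [Finite Q]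
    (hqp : ∀ c : Config Q, ValidFor F c → QuasiPeriodic c) {P : Pattern Q}
    (hP : P.dom.Nonempty) :
    ∃ r : ℕ, ∀ c : Config Q, ValidFor F c → P.appearsIn c →
      ∀ v, ∃ z, P.occursAt_s1 c z ∧ supNorm (v - z) ≤ r := by
  by_contra! h
  choose c hc hPc v hfar using h
  choose z hz hnear using fun n => exists_occursAt_forall_supNorm_le (hPc n) (v n)
  refine false_of_nearest_occurrences_escape hqp hP (fun n => (c n).translate (z n))
    (fun n => v n - z n) (fun n => (hc n).translate _) (fun n => ?_) (fun n => ?_) fun n y hy => ?_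
  · exact occursAt_translate.2 (by rw [add_zero]; exact hz n)
  · exact (hfar n (z n) (hz n)).le
  · rw [sub_sub]
    exact hnear n _ (occursAt_translate.1 hy)

theorem stmt1_general {Q : Type} [Fintype Q] (F : Set (Pattern Q))
    (hqp : ∀ c : Config Q, ValidFor F c → QuasiPeriodic c)
    (P : Pattern Q) :
    ∃ n : ℕ, ∀ c : Config Q, ValidFor F c → P.appearsIn c →
      ∀ v : ℤ × ℤ, P.appearsInPat (subPattern c v (square n)) := by
  rcases P.dom.eq_empty_or_nonempty with hdom | hP
  · exact ⟨0, fun c _ _ v => ⟨0, by simp [hdom]⟩⟩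
  obtain ⟨r, hr⟩ := exists_supNorm_sub_le_of_forall_quasiPeriodic hqp hP
  refine ⟨r + P.radius, fun c hc hPc v => ?_⟩
  obtain ⟨z, hz, hvz⟩ := hr c hc hPc v
  exact hz.appearsInPat_subPattern_square (by omega)

/-- If every valid tiling for `F` is quasi-periodic, then every pattern appearing in some
valid tiling appears, in every valid tiling containing it, in every square subpattern
with domain a translate of `[-n,n]^2`. -/
theorem stmt1 {Q : Type} [Fintype Q] (F : Set (Pattern Q)) (hF : F.Finite)
    (hqp : ∀ c : Config Q, ValidFor F c → QuasiPeriodic c)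
    (P : Pattern Q) (hP : ∃ c : Config Q, ValidFor F c ∧ P.appearsIn c) :
    ∃ n : ℕ, ∀ c : Config Q, ValidFor F c → P.appearsIn c →
      ∀ v : ℤ × ℤ, P.appearsInPat (subPattern c v (square n)) :=
  stmt1_general F hqp P
end

section
/- For every recursively enumerable set F of forbidden patterns over a finite alphabet Q in dimension 2, there exists a recursive (decidable) set F' of forbidden patterns defining the same set of valid configurations: a configuration avoids all patterns of F if and only if it avoids all patterns of F'. -/
/-- A code for a pattern over `Fin (k+1)`: a finite list of (position, color) pairs. -/
def PatCode (k : ℕ) := List ((ℤ × ℤ) × Fin (k + 1))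

/-- Decoding a pattern code into a pattern. -/
def decodePat (k : ℕ) (l : PatCode k) : Pattern (Fin (k + 1)) :=
  ⟨(l.map Prod.fst).toFinset,
   fun x => match l.find? (fun p => decide (p.1 = x)) with
     | some p => p.2
     | none => 0⟩

instance (k : ℕ) : Primcodable (PatCode k) :=
  inferInstanceAs (Primcodable (List ((ℤ × ℤ) × Fin (k + 1))))

/-! Let a machine enumerating `F` accept `l ∈ F` after `n` steps. Forbid a code when some prefix
of it is accepted within as many steps as the remaining suffix is long; this is decidable
(Craig's trick). Padding `l` by `n` entries that agree with an occurrence of its pattern gives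
such a code whose pattern occurs at the same place, while the pattern of any such code extends
that of its accepted prefix. So both sets forbid the same configurations. -/

open Nat.Partrec in
theorem REPred.exists_primrecRel {α : Type*} [Primcodable α] {p : α → Prop} (hp : REPred p) :
    ∃ R : α → ℕ → Prop, PrimrecRel R ∧ ∀ a, p a ↔ ∃ n, R a n := by
  obtain ⟨c, hc⟩ := Code.exists_code.1 hp
  have hdom (a : α) : (Code.eval c (Encodable.encode a)).Dom ↔ p a := by
    simp [hc, Encodable.encodek, Part.assert]
  refine ⟨fun a n => (Code.evaln n c (Encodable.encode a)).isSome, ?_, fun a => ?_⟩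
  · refine Primrec.primrecPred ?_
    simpa using Primrec.option_isSome.comp (Code.primrec_evaln.comp
      ((Primrec.snd.pair (Primrec.const c)).pair (Primrec.encode.comp Primrec.fst)))
  · rw [← hdom, Part.dom_iff_mem]
    simp only [Code.evaln_complete, Option.isSome_iff_exists, Option.mem_def]
    exact exists_comm

def paddedPrefixes {α : Type*} (R : List α → ℕ → Prop) : Set (List α) :=
  {l | ∃ m ≤ l.length, R (l.take m) (l.length - m)}

theorem PrimrecRel.computablePred_mem_paddedPrefixes {α : Type*} [Primcodable α]
    {R : List α → ℕ → Prop} (hR : PrimrecRel R) : ComputablePred (· ∈ paddedPrefixes R) := by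
  have hsplit : PrimrecRel fun (m : ℕ) (l : List α) => R (l.take m) (l.length - m) :=
    hR.comp (Primrec.list_take.comp Primrec.fst Primrec.snd)
      (Primrec.nat_sub.comp (Primrec.list_length.comp Primrec.snd) Primrec.fst)
  refine PrimrecPred.computablePred ?_
  refine (hsplit.exists_mem_list.comp (Primrec.list_range.comp
    (Primrec.succ.comp Primrec.list_length)) Primrec.id).of_eq fun l => ?_
  simp [paddedPrefixes]

def Pattern.appearsAt {Q : Type*} (P : Pattern Q) (c : Config Q) (v : ℤ × ℤ) : Prop :=
  ∀ x ∈ P.dom, c (v + x) = P.val x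

section decodePat

variable {k : ℕ} {l l₁ l₂ : List ((ℤ × ℤ) × Fin (k + 1))} {x : ℤ × ℤ}

theorem find?_isSome_iff_mem_decodePat_dom :
    (l.find? fun e => decide (e.1 = x)).isSome ↔ x ∈ (decodePat k l).dom := by
  simp [decodePat]

theorem decodePat_dom_append :
    (decodePat k (l₁ ++ l₂)).dom = (decodePat k l₁).dom ∪ (decodePat k l₂).dom := by
  simp [decodePat]

theorem exists_mem_of_mem_decodePat_dom (hx : x ∈ (decodePat k l).dom) :
    ∃ e ∈ l, e.1 = x ∧ (decodePat k l).val x = e.2 := by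
  obtain ⟨e, he⟩ := Option.isSome_iff_exists.1 (find?_isSome_iff_mem_decodePat_dom.2 hx)
  exact ⟨e, List.mem_of_find?_eq_some he, by simpa using List.find?_some he,
    by simp [decodePat, he]⟩

theorem decodePat_val_append_of_mem (hx : x ∈ (decodePat k l₁).dom) :
    (decodePat k (l₁ ++ l₂)).val x = (decodePat k l₁).val x := by
  obtain ⟨e, he⟩ := Option.isSome_iff_exists.1 (find?_isSome_iff_mem_decodePat_dom.2 hx)
  simp [decodePat, List.find?_append, he]

theorem decodePat_val_append_of_notMem (hx : x ∉ (decodePat k l₁).dom) :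
    (decodePat k (l₁ ++ l₂)).val x = (decodePat k l₂).val x := by
  rw [← find?_isSome_iff_mem_decodePat_dom, Option.not_isSome_iff_eq_none] at hx
  simp [decodePat, List.find?_append, hx]

variable {c : Config (Fin (k + 1))} {v : ℤ × ℤ}

theorem Pattern.appearsAt.of_decodePat_append (h : (decodePat k (l₁ ++ l₂)).appearsAt c v) :
    (decodePat k l₁).appearsAt c v := fun x hx => by
  rw [← decodePat_val_append_of_mem (l₂ := l₂) hx]
  exact h x (decodePat_dom_append ▸ Finset.mem_union_left _ hx)

theorem Pattern.appearsAt.decodePat_append (h₁ : (decodePat k l₁).appearsAt c v)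
    (h₂ : ∀ e ∈ l₂, c (v + e.1) = e.2) : (decodePat k (l₁ ++ l₂)).appearsAt c v := by
  intro x hx
  by_cases hx₁ : x ∈ (decodePat k l₁).dom
  · rw [decodePat_val_append_of_mem hx₁]
    exact h₁ x hx₁
  · have hx₂ : x ∈ (decodePat k l₂).dom := by
      simpa [decodePat_dom_append, hx₁] using hx
    obtain ⟨e, he, rfl, hval⟩ := exists_mem_of_mem_decodePat_dom hx₂
    rw [decodePat_val_append_of_notMem hx₁, hval]
    exact h₂ e he

end decodePat

theorem validFor_decodePat_paddedPrefixes_iff {k : ℕ}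
    {F : Set (List ((ℤ × ℤ) × Fin (k + 1)))} {R : List ((ℤ × ℤ) × Fin (k + 1)) → ℕ → Prop}
    (hF : ∀ l, l ∈ F ↔ ∃ n, R l n) (c : Config (Fin (k + 1))) :
    ValidFor (decodePat k '' F) c ↔ ValidFor (decodePat k '' paddedPrefixes R) c := by
  constructor
  · rintro hc _ ⟨l, ⟨m, -, hm⟩, rfl⟩ ⟨v, hv⟩
    rw [← List.take_append_drop m l] at hv
    exact hc _ ⟨_, (hF _).2 ⟨_, hm⟩, rfl⟩ ⟨v, Pattern.appearsAt.of_decodePat_append hv⟩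
  · rintro hc _ ⟨(l : List ((ℤ × ℤ) × Fin (k + 1))), hl, rfl⟩
      ⟨v, (hv : (decodePat k l).appearsAt c v)⟩
    obtain ⟨n, hn⟩ := (hF l).1 hl
    have hpad : l ++ List.replicate n (0, c v) ∈ paddedPrefixes R :=
      ⟨l.length, by simp, by simpa using hn⟩
    refine hc _ (Set.mem_image_of_mem _ hpad) ⟨v, hv.decodePat_append fun e he => ?_⟩
    rw [List.eq_of_mem_replicate he, add_zero]

/-- For every recursively enumerable set `F` of (codes of) forbidden patterns there is a
recursive set `F'` of (codes of) forbidden patterns defining the same set of valid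
configurations. -/
theorem stmt5 (k : ℕ) (F : Set (PatCode k)) (hF : REPred (· ∈ F)) :
    ∃ F' : Set (PatCode k), ComputablePred (· ∈ F') ∧
      ∀ c : Config (Fin (k + 1)),
        ValidFor (decodePat k '' F) c ↔ ValidFor (decodePat k '' F') c := by
  obtain ⟨R, hR, hF_iff⟩ := hF.exists_primrecRel
  exact ⟨paddedPrefixes R, hR.computablePred_mem_paddedPrefixes,
    validFor_decodePat_paddedPrefixes_iff hF_iff⟩
end

section
/- For any non-empty minimal effective one-dimensional subshift X ⊆ Σ^Z containing no periodic configuration, there exists a computable sequence (u_n) of finite words, each appearing in some configuration of X, such that no u_n is a prefix of any other u_m (for n ≠ m). -/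
/-- The word `w` occurs in the bi-infinite configuration `c` at position `i`. -/
def OccursAt {α : Type*} (w : List α) (c : ℤ → α) (i : ℤ) : Prop :=
  ∀ j : Fin w.length, c (i + (j : ℕ)) = w.get j

/-- The word `w` appears (somewhere) in `c`. -/
def AppearsIn {α : Type*} (w : List α) (c : ℤ → α) : Prop :=
  ∃ i : ℤ, OccursAt w c i

/-- `w` is in the language of the set of configurations `X`. -/
def InLang {α : Type*} (X : Set (ℤ → α)) (w : List α) : Prop :=
  ∃ c ∈ X, AppearsIn w c

/-- `X` is minimal: every word of its language appears in every configuration of `X`. -/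
def MinimalLang {α : Type*} (X : Set (ℤ → α)) : Prop :=
  ∀ w : List α, InLang X w → ∀ c ∈ X, AppearsIn w c

/-- The set of configurations avoiding every word of `Fw`. -/
def Avoiders {α : Type*} (Fw : Set (List α)) : Set (ℤ → α) :=
  {c | ∀ w ∈ Fw, ¬ AppearsIn w c}

/-- `c` is periodic (its shift orbit is finite). -/
def PeriodicConf {α : Type*} (c : ℤ → α) : Prop :=
  ∃ p : ℤ, p ≠ 0 ∧ ∀ i : ℤ, c (i + p) = c i

/-- `X` is shift-invariant. -/
def ShiftInv {α : Type*} (X : Set (ℤ → α)) : Prop :=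
  ∀ c ∈ X, (fun i => c (i + 1)) ∈ X ∧ (fun i => c (i - 1)) ∈ X

/-- `X` is a subshift: closed (for the product of discrete topologies) and
shift-invariant. -/
def IsSubshift {α : Type*} (X : Set (ℤ → α)) : Prop :=
  @IsClosed _ (@Pi.topologicalSpace ℤ (fun _ => α) (fun _ => ⊥)) X ∧ ShiftInv X

/-!
By compactness and minimality, every word `w` of the language is unavoidable modulo finitely many
forbidden words: for some `N` and some finite set `B` of forbidden words, every word of length `N`
contains `w` or a word of `B`. Once `B` has shown up in the enumeration of the forbidden words this
is a finite check, so the language is recursively enumerable.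

Aperiodicity makes every word `v` of the language extend to a right-special word `v ++ t`, one with
two distinct extensions `v ++ t ++ [a]` and `v ++ t ++ [b]`: otherwise two occurrences of `v` in a
configuration would force it to be periodic to the right of the first one, and, since every word
recurs there, periodic everywhere.

Searching effectively for such branchings along a spine `V 0 = []`, `V (n + 1) = V n ++ t ++ [b]`,
and outputting `u n = V n ++ t ++ [a]`, gives a computable prefix antichain.
-/
section Windows

variable {α : Type*}

def window (c : ℤ → α) (i : ℤ) (n : ℕ) : List α := List.ofFn fun j : Fin n => c (i + j)

@[simp] theorem length_window (c : ℤ → α) (i : ℤ) (n : ℕ) : (window c i n).length = n :=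
  List.length_ofFn

@[simp] theorem getElem_window (c : ℤ → α) (i : ℤ) (n j : ℕ) (h : j < (window c i n).length) :
    (window c i n)[j] = c (i + j) := by
  simp [window]

theorem window_add (c : ℤ → α) (i : ℤ) (m n : ℕ) :
    window c i (m + n) = window c i m ++ window c (i + m) n := by
  simp [window, List.ofFn_add, add_assoc]

theorem window_one (c : ℤ → α) (i : ℤ) : window c i 1 = [c i] := by
  simp [window]

theorem occursAt_iff_window_eq {w : List α} {c : ℤ → α} {i : ℤ} :
    OccursAt w c i ↔ window c i w.length = w := by
  simp [OccursAt, List.ext_get_iff, window, Fin.forall_iff]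

theorem isInfix_window_iff {w : List α} {c : ℤ → α} {i : ℤ} {n : ℕ} :
    w <:+: window c i n ↔ ∃ d : ℕ, w.length + d ≤ n ∧ OccursAt w c (i + d) := by
  rw [List.infix_iff_getElem?]
  constructor
  · rintro ⟨d, hd, h⟩
    refine ⟨d, by simpa using hd, fun j => ?_⟩
    have := h j j.2
    rw [List.getElem?_eq_getElem (by simp at hd ⊢; omega), getElem_window] at this
    simpa [add_assoc, add_comm] using this
  · rintro ⟨d, hd, h⟩
    refine ⟨d, by simpa using hd, fun j hj => ?_⟩
    rw [List.getElem?_eq_getElem (by simp; omega), getElem_window]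
    simpa [add_assoc, add_comm] using h ⟨j, hj⟩

theorem window_isInfix_window (c : ℤ → α) {i i' : ℤ} {n n' : ℕ} (h₁ : i ≤ i')
    (h₂ : i' + n' ≤ i + n) : window c i' n' <:+: window c i n := by
  refine isInfix_window_iff.2 ⟨(i' - i).toNat, by simp; omega, ?_⟩
  rw [occursAt_iff_window_eq, length_window]
  congr 1
  omega

theorem exists_window_eq (a : α) (v : List α) (i : ℤ) : ∃ c : ℤ → α, window c i v.length = v := by
  refine ⟨fun x => v.getD (x - i).toNat a, List.ext_getElem (length_window ..) fun j h _ => ?_⟩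
  simp only [getElem_window, add_sub_cancel_left, Int.toNat_natCast]
  exact List.getD_eq_getElem ..

theorem inLang_window {X : Set (ℤ → α)} {c : ℤ → α} (hc : c ∈ X) (i : ℤ) (n : ℕ) :
    InLang X (window c i n) :=
  ⟨c, hc, i, occursAt_iff_window_eq.2 (by rw [length_window])⟩

theorem isClosed_setOf_window [TopologicalSpace α] [DiscreteTopology α] (P : List α → Prop)
    (i : ℤ) (n : ℕ) : IsClosed {c : ℤ → α | P (window c i n)} :=
  (isClosed_discrete {g : Fin n → α | P (List.ofFn g)}).preimage
    (f := fun (c : ℤ → α) (j : Fin n) => c (i + j)) (continuous_pi fun _ => continuous_apply _)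

end Windows

section Compactness

variable {α : Type*}

def Unavoidable (S : List (List α)) (N : ℕ) : Prop :=
  ∀ v : List α, v.length = N → ∃ f ∈ S, f <:+: v

theorem Unavoidable.exists_occursAt {Fw : Set (List α)} {w : List α} {B : List (List α)} {N : ℕ}
    (hS : Unavoidable (w :: B) N) (hB : ∀ f ∈ B, f ∈ Fw) {c : ℤ → α} (hc : c ∈ Avoiders Fw)
    (i : ℤ) : ∃ d : ℕ, OccursAt w c (i + d) := by
  obtain ⟨f, hf, hfc⟩ := hS (window c i N) (length_window c i N)
  obtain ⟨d, -, hd⟩ := isInfix_window_iff.1 hfc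
  rcases List.mem_cons.1 hf with rfl | hfB
  · exact ⟨d, hd⟩
  · exact (hc f (hB f hfB) ⟨_, hd⟩).elim

theorem OccursAt.isInfix_window {w : List α} {c : ℤ → α} {i : ℤ} (h : OccursAt w c i) {N : ℕ}
    (hN : i.natAbs + w.length ≤ N) : w <:+: window c (-N) (2 * N + 1) := by
  have := window_isInfix_window c (i := -N) (i' := i) (n' := w.length) (n := 2 * N + 1)
    (by omega) (by omega)
  rwa [occursAt_iff_window_eq.1 h] at this

theorem exists_unavoidable_of_inLang [Finite α] {Fw : Set (List α)}
    (hmin : MinimalLang (Avoiders Fw)) {w : List α} (hw : InLang (Avoiders Fw) w) :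
    ∃ N B, (∀ f ∈ B, f ∈ Fw) ∧ Unavoidable (w :: B) N := by
  by_contra! hno
  let _ : TopologicalSpace α := ⊥
  have : DiscreteTopology α := ⟨rfl⟩
  let ι := ℕ × {B : List (List α) // ∀ f ∈ B, f ∈ Fw}
  have : Nonempty ι := ⟨(0, ⟨[], by simp⟩)⟩
  -- configurations whose central block `c[-N, N]` avoids `w` and the words of `B`
  let K : ι → Set (ℤ → α) := fun p =>
    {c | ∀ f ∈ w :: p.2.1, ¬ f <:+: window c (-p.1) (2 * p.1 + 1)}
  have hK_closed (p : ι) : IsClosed (K p) :=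
    isClosed_setOf_window (fun v => ∀ f ∈ w :: p.2.1, ¬ f <:+: v) _ _
  have hK_nonempty (p : ι) : (K p).Nonempty := by
    obtain ⟨v, hv, hvS⟩ : ∃ v : List α, v.length = 2 * p.1 + 1 ∧ ∀ f ∈ w :: p.2.1, ¬ f <:+: v := by
      simpa [Unavoidable] using hno (2 * p.1 + 1) p.2.1 p.2.2
    obtain ⟨c, hc⟩ := exists_window_eq (hw.choose 0) v (-p.1)
    rw [hv] at hc
    exact ⟨c, fun f hf => hc ▸ hvS f hf⟩
  have hK_directed : Directed (· ⊇ ·) K := by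
    rintro ⟨N, B, hB⟩ ⟨N', B', hB'⟩
    refine ⟨(max N N', ⟨B ++ B', fun f hf => (List.mem_append.1 hf).elim (hB f) (hB' f)⟩), ?_, ?_⟩
    all_goals
      intro c hc f hf hfc
      exact hc f (by simp only [List.mem_cons, List.mem_append] at hf ⊢; tauto)
        (hfc.trans (window_isInfix_window c (by omega) (by omega)))
  obtain ⟨c, hc⟩ := IsCompact.nonempty_iInter_of_directed_nonempty_isCompact_isClosed K
    hK_directed hK_nonempty (fun p => (hK_closed p).isCompact) hK_closed
  rw [Set.mem_iInter] at hc
  have hcX : c ∈ Avoiders Fw := fun f hf ⟨i, hi⟩ =>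
    hc (_, ⟨[f], by simpa using hf⟩) f (by simp) (hi.isInfix_window le_rfl)
  obtain ⟨i, hi⟩ := hmin w hw c hcX
  exact hc (_, ⟨[], by simp⟩) w (by simp) (hi.isInfix_window le_rfl)

theorem exists_occursAt_ge [Finite α] {Fw : Set (List α)} (hmin : MinimalLang (Avoiders Fw))
    {w : List α} (hw : InLang (Avoiders Fw) w) {c : ℤ → α} (hc : c ∈ Avoiders Fw) (i : ℤ) :
    ∃ d : ℕ, OccursAt w c (i + d) := by
  obtain ⟨N, B, hB, hS⟩ := exists_unavoidable_of_inLang hmin hw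
  exact hS.exists_occursAt hB hc i

theorem inLang_iff_exists_unavoidable [Finite α] {Fw : Set (List α)}
    (hne : (Avoiders Fw).Nonempty) (hmin : MinimalLang (Avoiders Fw)) {w : List α} :
    InLang (Avoiders Fw) w ↔ ∃ N B, (∀ f ∈ B, f ∈ Fw) ∧ Unavoidable (w :: B) N := by
  refine ⟨exists_unavoidable_of_inLang hmin, fun ⟨N, B, hB, hS⟩ => ?_⟩
  obtain ⟨c, hc⟩ := hne
  obtain ⟨d, hd⟩ := hS.exists_occursAt hB hc 0
  exact ⟨c, hc, _, hd⟩

end Compactness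

section RightSpecial

variable {α : Type*}

theorem eq_of_occursAt_of_unique_extension {X : Set (ℤ → α)} {v : List α}
    (huniq : ∀ t a b, InLang X (v ++ t ++ [a]) → InLang X (v ++ t ++ [b]) → a = b)
    {c : ℤ → α} (hc : c ∈ X) {i i' : ℤ} (hi : OccursAt v c i) (hi' : OccursAt v c i') (n : ℕ) :
    c (i + n) = c (i' + n) := by
  have hwin (m : ℕ) : window c i (v.length + m) = window c i' (v.length + m) := by
    induction m with
    | zero => rw [Nat.add_zero, occursAt_iff_window_eq.1 hi, occursAt_iff_window_eq.1 hi']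
    | succ m ih =>
      have hs : window c i (v.length + m) = v ++ window c (i + v.length) m := by
        rw [window_add, occursAt_iff_window_eq.1 hi]
      have ha : InLang X (v ++ window c (i + v.length) m ++ [c (i + (v.length + m : ℕ))]) := by
        rw [← hs, ← window_one, ← window_add]
        exact inLang_window hc i _
      have hb : InLang X (v ++ window c (i + v.length) m ++ [c (i' + (v.length + m : ℕ))]) := by
        rw [← hs, ih, ← window_one, ← window_add]
        exact inLang_window hc i' _
      rw [← add_assoc, window_add, window_add c i', ih, window_one, window_one,
        huniq _ _ _ ha hb]
  have := congrArg (·[n]?) (hwin (n + 1))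
  rw [List.getElem?_eq_getElem (by simp; omega), List.getElem?_eq_getElem (by simp; omega)] at this
  simpa using this

theorem exists_rightSpecial_extension [Finite α] {Fw : Set (List α)}
    (hmin : MinimalLang (Avoiders Fw)) (hap : ∀ c ∈ Avoiders Fw, ¬ PeriodicConf c) {v : List α}
    (hv : InLang (Avoiders Fw) v) :
    ∃ t a b, a ≠ b ∧ InLang (Avoiders Fw) (v ++ t ++ [a]) ∧
      InLang (Avoiders Fw) (v ++ t ++ [b]) := by
  by_contra! hno
  have huniq : ∀ t a b, InLang (Avoiders Fw) (v ++ t ++ [a]) →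
      InLang (Avoiders Fw) (v ++ t ++ [b]) → a = b := fun t a b ha hb =>
    by_contra fun hab => hno t a b hab ha hb
  have ⟨c, hc, _⟩ := hv
  obtain ⟨d₀, h₀⟩ := exists_occursAt_ge hmin hv hc 0
  obtain ⟨d₁, h₁⟩ := exists_occursAt_ge hmin hv hc (d₀ + 1)
  rw [zero_add] at h₀
  set p : ℕ := d₁ + 1
  have hshift (n : ℕ) : c (d₀ + n + p) = c (d₀ + n) := by
    rw [eq_of_occursAt_of_unique_extension huniq hc h₀ h₁ n]
    congr 1
    push_cast [p]
    ring
  -- every word of `c`, in particular `c[x, x + p]`, recurs to the right of `d₀`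
  refine hap c hc ⟨p, by omega, fun x => ?_⟩
  obtain ⟨n, hn⟩ := exists_occursAt_ge hmin (inLang_window hc x (p + 1)) hc d₀
  have h0 := hn ⟨0, by simp⟩
  have hp := hn ⟨p, by simp⟩
  simp only [List.get_eq_getElem, getElem_window, Nat.cast_zero, add_zero] at h0 hp
  rw [← hp, hshift, h0]

end RightSpecial

section PrefixAntichain

variable {α : Type*}

theorem not_isPrefix_of_branching {V u : ℕ → List α}
    (hV : ∀ n, ∃ t a b, a ≠ b ∧ u n = V n ++ t ++ [a] ∧ V (n + 1) = V n ++ t ++ [b])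
    {n m : ℕ} (hnm : n ≠ m) : ¬ u n <+: u m := by
  choose t a b hab hu hV using hV
  have hVmono {n m : ℕ} (h : n ≤ m) : V n <+: V m := by
    induction m, h using Nat.le_induction with
    | base => exact List.prefix_refl _
    | succ m _ ih => exact ih.trans (hV m ▸ (List.prefix_append _ _).trans (List.prefix_append _ _))
  have hlen (n : ℕ) : (u n).length = (V (n + 1)).length := by simp [hu, hV]
  have hlt (n : ℕ) : (V n).length < (u n).length := by simp [hu]
  intro hpre
  rcases Nat.lt_or_gt_of_ne hnm with h | h
  · have hnext : V (n + 1) <+: u m :=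
      (hVmono h).trans (hu m ▸ (List.prefix_append _ _).trans (List.prefix_append _ _))
    have heq : u n = V (n + 1) :=
      (List.prefix_of_prefix_length_le hpre hnext (hlen n).le).eq_of_length (hlen n)
    exact hab n (by simpa [hu, hV] using heq)
  · have := hpre.length_le
    have := (hVmono (show m + 1 ≤ n from h)).length_le
    have := hlen m
    have := hlt n
    omega

end PrefixAntichain

section BranchingSearch

open Primrec

variable {α γ : Type*} [Primcodable α] [Primcodable γ] (C : γ → List α → Prop)

/-- `p = ((t, a, b), c₁, c₂)` witnesses that `v ++ t` has two distinct one-letter extensions,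
certified by `c₁` and `c₂`. -/
def IsBranching (v : List α) (p : (List α × α × α) × γ × γ) : Prop :=
  p.1.2.1 ≠ p.1.2.2 ∧ C p.2.1 (v ++ p.1.1 ++ [p.1.2.1]) ∧ C p.2.2 (v ++ p.1.1 ++ [p.1.2.2])

open Classical in
noncomputable def findBranching (v : List α) : Part ((List α × α × α) × γ × γ) :=
  Nat.rfindOpt fun n =>
    (Encodable.decode n).bind fun p => if IsBranching C v p then some p else none

noncomputable def spine (n : ℕ) : Part (List α) :=
  n.rec (Part.some []) fun _ IH =>
    IH.bind fun v => (findBranching C v).map fun p => v ++ p.1.1 ++ [p.1.2.2]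

noncomputable def leaf (n : ℕ) : Part (List α) :=
  (spine C n).bind fun v => (findBranching C v).map fun p => v ++ p.1.1 ++ [p.1.2.1]

variable {C}

theorem isBranching_of_mem_findBranching {v : List α} {p : (List α × α × α) × γ × γ}
    (hp : p ∈ findBranching C v) : IsBranching C v p := by
  obtain ⟨n, hn⟩ := Nat.rfindOpt_spec hp
  simp only [Option.mem_def, Option.bind_eq_some_iff, Option.ite_none_right_eq_some,
    Option.some.injEq] at hn
  obtain ⟨p', -, h, rfl⟩ := hn
  exact h

theorem findBranching_dom {v : List α} {p : (List α × α × α) × γ × γ} (hp : IsBranching C v p) :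
    (findBranching C v).Dom :=
  Nat.rfindOpt_dom.2 ⟨Encodable.encode p, p, by simp [hp]⟩

theorem primrecRel_isBranching (hC : PrimrecRel C) : PrimrecRel (IsBranching C) := by
  let W := List α × (List α × α × α) × γ × γ
  have ht : Primrec fun q : W => q.2.1.1 := fst.comp (fst.comp snd)
  have ha : Primrec fun q : W => q.2.1.2.1 := fst.comp (snd.comp (fst.comp snd))
  have hb : Primrec fun q : W => q.2.1.2.2 := snd.comp (snd.comp (fst.comp snd))
  have hc₁ : Primrec fun q : W => q.2.2.1 := fst.comp (snd.comp snd)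
  have hc₂ : Primrec fun q : W => q.2.2.2 := snd.comp (snd.comp snd)
  exact (Primrec.eq.comp ha hb).not.and
    ((hC.comp hc₁ (list_concat.comp (list_append.comp fst ht) ha)).and
      (hC.comp hc₂ (list_concat.comp (list_append.comp fst ht) hb)))

theorem partrec_findBranching (hC : PrimrecRel C) : Partrec (findBranching (α := α) C) := by
  classical
  refine Partrec.rfindOpt (Primrec.to_comp ?_)
  exact option_bind (Primrec.decode.comp snd)
    (Primrec.ite ((primrecRel_isBranching hC).comp (fst.comp fst) snd) (option_some.comp snd)
      (const none))

theorem partrec_leaf (hC : PrimrecRel C) : Partrec (leaf (α := α) C) := by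
  have hbranch (pick : (List α × α × α) × γ × γ → α) (hpick : Primrec pick) :
      Partrec₂ fun (_ : ℕ) (v : List α) =>
        (findBranching C v).map fun p => v ++ p.1.1 ++ [pick p] :=
    ((partrec_findBranching hC).comp Computable.snd).map
      (list_concat.comp (list_append.comp (snd.comp fst) (fst.comp (fst.comp snd)))
        (hpick.comp snd)).to_comp
  have hspine : Partrec (spine (α := α) C) :=
    Partrec.nat_rec Computable.id (Partrec.const' _)
      ((hbranch _ (snd.comp (snd.comp fst))).comp Computable.fst
        (Computable.snd.comp Computable.snd)).to₂
  exact hspine.bind (hbranch _ (fst.comp (snd.comp fst)))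

theorem exists_computable_prefix_antichain {L : List α → Prop} (hC : PrimrecRel C)
    (hL : ∀ w, L w ↔ ∃ c, C c w) (hnil : L [])
    (hsplit : ∀ v, L v → ∃ t a b, a ≠ b ∧ L (v ++ t ++ [a]) ∧ L (v ++ t ++ [b])) :
    ∃ u : ℕ → List α, Computable u ∧ (∀ n, L (u n)) ∧ ∀ n m, n ≠ m → ¬ u n <+: u m := by
  have hfind (v : List α) (hv : L v) : ∃ p, p ∈ findBranching C v := by
    obtain ⟨t, a, b, hab, ha, hb⟩ := hsplit v hv
    obtain ⟨c₁, hc₁⟩ := (hL _).1 ha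
    obtain ⟨c₂, hc₂⟩ := (hL _).1 hb
    exact Part.dom_iff_mem.1 (findBranching_dom (p := ((t, a, b), c₁, c₂)) ⟨hab, hc₁, hc₂⟩)
  have hbranch {v : List α} {p} (hp : p ∈ findBranching C v) :
      L (v ++ p.1.1 ++ [p.1.2.1]) ∧ L (v ++ p.1.1 ++ [p.1.2.2]) :=
    have ⟨_, h₁, h₂⟩ := isBranching_of_mem_findBranching hp
    ⟨(hL _).2 ⟨_, h₁⟩, (hL _).2 ⟨_, h₂⟩⟩
  have hspine_succ {n : ℕ} {v : List α} (hv : v ∈ spine C n) {p} (hp : p ∈ findBranching C v) :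
      v ++ p.1.1 ++ [p.1.2.2] ∈ spine C (n + 1) :=
    Part.mem_bind hv (Part.mem_map _ hp)
  have hspine (n : ℕ) : ∃ v ∈ spine C n, L v := by
    induction n with
    | zero => exact ⟨[], Part.mem_some _, hnil⟩
    | succ n ih =>
      obtain ⟨v, hv, hLv⟩ := ih
      obtain ⟨p, hp⟩ := hfind v hLv
      exact ⟨_, hspine_succ hv hp, (hbranch hp).2⟩
  choose V hV hLV using hspine
  choose p hp using fun n => hfind (V n) (hLV n)
  let u n := V n ++ (p n).1.1 ++ [(p n).1.2.1]
  refine ⟨u, (partrec_leaf hC).of_eq_tot fun n => Part.mem_bind (hV n) (Part.mem_map _ (hp n)),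
    fun n => (hbranch (hp n)).1, fun n m hnm => not_isPrefix_of_branching (V := V) (u := u)
      (fun n => ?_) hnm⟩
  exact ⟨(p n).1.1, _, _, (isBranching_of_mem_findBranching (hp n)).1, rfl,
    Part.mem_unique (hV (n + 1)) (hspine_succ (hV n) (hp n))⟩

end BranchingSearch

section Decidability

open Primrec

variable {α : Type*}

theorem isInfix_iff_exists_isPrefix_drop {w v : List α} :
    w <:+: v ↔ ∃ d ∈ List.range (v.length + 1), w <+: v.drop d := by
  constructor
  · rintro ⟨s, t, rfl⟩
    exact ⟨s.length, List.mem_range.2 (by simp), by simp⟩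
  · rintro ⟨d, -, h⟩
    exact h.isInfix.trans (List.drop_suffix d v).isInfix

noncomputable def words [Fintype α] : ℕ → List (List α)
  | 0 => [[]]
  | n + 1 => (words n).flatMap fun v => (Finset.univ : Finset α).toList.map (· :: v)

theorem mem_words [Fintype α] {v : List α} {n : ℕ} : v ∈ words n ↔ v.length = n := by
  induction n generalizing v with
  | zero => simp [words]
  | succ n ih => cases v <;> simp [words, ih]

variable [Primcodable α]

theorem primrecRel_isPrefix : PrimrecRel fun w v : List α => w <+: v :=
  (Primrec.eq.comp fst (list_take.comp (list_length.comp fst) snd)).of_eq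
    fun _ => List.prefix_iff_eq_take.symm

theorem primrecRel_isInfix : PrimrecRel fun w v : List α => w <:+: v := by
  have hR : PrimrecRel fun (d : ℕ) (q : List α × List α) => q.1 <+: q.2.drop d :=
    primrecRel_isPrefix.comp (fst.comp snd) (list_drop.comp fst (snd.comp snd))
  exact (hR.exists_mem_list.comp (list_range.comp (succ.comp (list_length.comp snd)))
    Primrec.id).of_eq (q := fun q : List α × List α => q.1 <:+: q.2)
    fun _ => isInfix_iff_exists_isPrefix_drop.symm

theorem primrec_words [Fintype α] : Primrec (words (α := α)) := by
  have hstep : Primrec₂ fun (_ : ℕ) (ws : List (List α)) =>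
      ws.flatMap fun v => (Finset.univ : Finset α).toList.map (· :: v) :=
    list_flatMap snd (list_map (g := fun (r : (ℕ × List (List α)) × List α) (a : α) => a :: r.2)
      (const _) (list_cons.comp snd (snd.comp fst))).to₂
  exact (nat_rec₁ [[]] hstep).of_eq fun n => by induction n <;> simp_all [words]

theorem primrecRel_unavoidable [Fintype α] : PrimrecRel (Unavoidable (α := α)) := by
  have hR : PrimrecRel fun (v : List α) (S : List (List α)) => ∃ f ∈ S, f <:+: v :=
    (PrimrecRel.exists_mem_list primrecRel_isInfix).comp snd fst
  exact ((PrimrecRel.forall_mem_list hR).comp (primrec_words.comp snd) fst).of_eq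
    (q := fun q : List (List α) × ℕ => Unavoidable q.1 q.2)
    fun _ => by simp [Unavoidable, mem_words]

end Decidability

theorem REPred.exists_monotone_primrecRel {β : Type*} [Primcodable β] {p : β → Prop}
    (hp : REPred p) : ∃ R : ℕ → β → Prop, PrimrecRel R ∧ Monotone R ∧ ∀ b, p b ↔ ∃ s, R s b := by
  obtain ⟨cd, hcd⟩ := Nat.Partrec.Code.exists_code.1 hp
  refine ⟨fun s b => (Nat.Partrec.Code.evaln s cd (Encodable.encode b)).isSome, ?_, ?_, fun b => ?_⟩
  · exact Primrec.eq.comp (Primrec.option_isSome.comp (Nat.Partrec.Code.primrec_evaln.comp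
      ((Primrec.fst.pair (Primrec.const cd)).pair (Primrec.encode.comp Primrec.snd))))
      (Primrec.const true)
  · intro s s' h b hb
    obtain ⟨x, hx⟩ := Option.isSome_iff_exists.1 hb
    exact Option.isSome_iff_exists.2 ⟨x, Nat.Partrec.Code.evaln_mono h hx⟩
  · have : p b ↔ (Nat.Partrec.Code.eval cd (Encodable.encode b)).Dom := by
      simp [hcd, Encodable.encodek, Part.assert]
    simp only [this, Part.dom_iff_mem, Nat.Partrec.Code.evaln_complete, Option.isSome_iff_exists]
    exact exists_comm

theorem Monotone.exists_forall_mem {β : Type*} {R : ℕ → β → Prop} (hR : Monotone R)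
    {B : List β} (hB : ∀ b ∈ B, ∃ s, R s b) : ∃ s, ∀ b ∈ B, R s b :=
  ((Filter.eventually_all_finite B.finite_toSet).2 fun b hb =>
    have ⟨s, hs⟩ := hB b hb
    Filter.eventually_atTop.2 ⟨s, fun _ h => hR h b hs⟩).exists

theorem inLang_nil {α : Type*} {X : Set (ℤ → α)} (hne : X.Nonempty) : InLang X [] :=
  have ⟨c, hc⟩ := hne
  ⟨c, hc, 0, fun j => j.elim0⟩

theorem exists_primrecRel_inLang_iff {α : Type*} [Fintype α] [Primcodable α]
    {Fw : Set (List α)} (hre : REPred (· ∈ Fw)) (hne : (Avoiders Fw).Nonempty)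
    (hmin : MinimalLang (Avoiders Fw)) :
    ∃ C : List (List α) × ℕ × ℕ → List α → Prop, PrimrecRel C ∧
      ∀ w, InLang (Avoiders Fw) w ↔ ∃ q, C q w := by
  obtain ⟨R, hR, hRmono, hFw⟩ := hre.exists_monotone_primrecRel
  refine ⟨fun q w => (∀ f ∈ q.1, R q.2.2 f) ∧ Unavoidable (w :: q.1) q.2.1, ?_, fun w => ?_⟩
  · open Primrec in
    have hR' : PrimrecRel fun f s => R s f := hR.comp snd fst
    exact ((PrimrecRel.forall_mem_list hR').comp (fst.comp fst) (snd.comp (snd.comp fst))).and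
      (primrecRel_unavoidable.comp (list_cons.comp snd (fst.comp fst)) (fst.comp (snd.comp fst)))
  rw [inLang_iff_exists_unavoidable hne hmin]
  constructor
  · rintro ⟨N, B, hB, hS⟩
    obtain ⟨s, hs⟩ := hRmono.exists_forall_mem fun f hf => (hFw f).1 (hB f hf)
    exact ⟨(B, N, s), hs, hS⟩
  · rintro ⟨⟨B, N, s⟩, hs, hS⟩
    exact ⟨N, B, fun f hf => (hFw f).2 ⟨s, hs f hf⟩, hS⟩

/-- For any non-empty minimal effective $1$-dimensional subshift with no periodic
configuration, there is a computable sequence of words of its language, no one of which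
is a prefix of another. -/
theorem stmt6 (k : ℕ) (Fw : Set (List (Fin k))) (hre : REPred (· ∈ Fw))
    (X : Set (ℤ → Fin k)) (hX : X = Avoiders Fw)
    (hne : X.Nonempty) (hmin : MinimalLang X)
    (hap : ∀ c ∈ X, ¬ PeriodicConf c) :
    ∃ u : ℕ → List (Fin k), Computable u ∧
      (∀ n : ℕ, InLang X (u n)) ∧
      ∀ n m : ℕ, n ≠ m → ¬ (u n <+: u m) := by
  subst hX
  obtain ⟨C, hC, hL⟩ := exists_primrecRel_inLang_iff hre hne hmin
  exact exists_computable_prefix_antichain hC hL (inLang_nil hne)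
    fun v hv => exists_rightSpecial_extension hmin hap hv
end

section
/- Fix an integer p ≥ 2 and let φ_p(n) denote the first nonzero digit of n in base p (i.e., the digit at the lowest position where the base-p expansion of n is nonzero — equivalently, (n / p^k) mod p where p^k is the largest power of p dividing n). Let w_p be the infinite word φ_p(1)φ_p(2)φ_p(3).... Then for every finite factor w of w_p there exists k such that w appears in w_p periodically with period p^k: there is a position i with w appearing at positions i + j·p^k for all j ≥ 0. -/
/-- The first nonzero digit in the base-`p` expansion of `n` (reading from the least
significant digit): `(n / p^k) % p` where `p^k` is the largest power of `p` dividing `n`. -/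
def firstDigit (p n : ℕ) : ℕ := (n / p ^ padicValNat p n) % p

/-- The Toeplitz-type word `w_p`: its `i`-th letter is the first nonzero base-`p` digit
of `i + 1`. -/
def wp (p : ℕ) (i : ℕ) : ℕ := firstDigit p (i + 1)

/-- The finite word `w` occurs in `w_p` at position `i`. -/
def OccursAtW (p : ℕ) (w : List ℕ) (i : ℕ) : Prop :=
  ∀ j : Fin w.length, wp p (i + (j : ℕ)) = w.get j

/-- The subshift `X_p`: all bi-infinite configurations all of whose finite factors are
factors of `w_p`. -/
def Xp (p : ℕ) : Set (ℤ → ℕ) :=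
  {c | ∀ (i : ℤ) (n : ℕ), ∃ m : ℕ, ∀ j : ℕ, j < n → c (i + (j : ℕ)) = wp p (m + j)}

/-!
If `p ^ v` is the exact power of `p` dividing `n ≠ 0`, adding a multiple of `p ^ (v + 1)` to `n`
changes neither `v` nor the base-`p` digit of `n` at position `v`. Since `v < n`, every letter
`w_p(i)` with `i < k` recurs with period `p ^ k`; so an occurrence of `w` at `i` recurs with
period `p ^ k` once `k ≥ i + |w|`.
-/

theorem padicValNat_add_of_pow_succ_dvd {p n m : ℕ} (hn : n ≠ 0)
    (hm : p ^ (padicValNat p n + 1) ∣ m) : padicValNat p (n + m) = padicValNat p n := by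
  rcases eq_or_ne p 1 with rfl | hp
  · simp
  apply le_antisymm
  · rw [← Nat.lt_succ_iff, ← not_le, ← Nat.pow_dvd_iff_le_padicValNat hp (by omega),
      Nat.dvd_add_left hm, Nat.pow_dvd_iff_le_padicValNat hp hn]
    omega
  · rw [← Nat.pow_dvd_iff_le_padicValNat hp (by omega)]
    exact dvd_add pow_padicValNat_dvd ((pow_dvd_pow p (padicValNat p n).le_succ).trans hm)

theorem firstDigit_add_of_pow_succ_dvd {p n m : ℕ} (hn : n ≠ 0)
    (hm : p ^ (padicValNat p n + 1) ∣ m) : firstDigit p (n + m) = firstDigit p n := by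
  unfold firstDigit
  rw [padicValNat_add_of_pow_succ_dvd hn hm]
  obtain ⟨c, rfl⟩ := hm
  have hpow : 0 < p ^ padicValNat p n :=
    Nat.pos_of_dvd_of_pos pow_padicValNat_dvd (Nat.pos_of_ne_zero hn)
  rw [pow_succ, mul_assoc, mul_comm, Nat.add_mul_div_right _ _ hpow, Nat.add_mul_mod_self_left]

theorem wp_add_mul_pow {p i k : ℕ} (hik : i < k) (j : ℕ) : wp p (i + j * p ^ k) = wp p i := by
  have hval : padicValNat p (i + 1) + 1 ≤ k :=
    (Nat.padicValNat_lt_self (p := p) i.succ_ne_zero).trans_le hik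
  unfold wp
  rw [add_right_comm]
  exact firstDigit_add_of_pow_succ_dvd i.succ_ne_zero
    ((pow_dvd_pow p hval).mul_left j)

theorem stmt8_general (p : ℕ) (w : List ℕ) (hw : ∃ i : ℕ, OccursAtW p w i) :
    ∃ (k : ℕ) (i : ℕ), ∀ j : ℕ, OccursAtW p w (i + j * p ^ k) := by
  obtain ⟨i, hi⟩ := hw
  refine ⟨i + w.length, i, fun j t => ?_⟩
  rw [add_right_comm, wp_add_mul_pow (by omega)]
  exact hi t

/-- Every factor of `w_p` appears in `w_p` periodically with period `p^k` for some `k`. -/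
theorem stmt8 (p : ℕ) (hp : 2 ≤ p) (w : List ℕ) (hw : ∃ i : ℕ, OccursAtW p w i) :
    ∃ (k : ℕ) (i : ℕ), ∀ j : ℕ, OccursAtW p w (i + j * p ^ k) :=
  stmt8_general p w hw
end

section
/- Every factor of length n of the word w_p (where w_p(m) = first nonzero base-p digit of m+1) occurring in some configuration of the associated subshift X_p already occurs in w_p at a position less than p^n; consequently X_p is an effective subshift. -/
/-!
Put `s = n - 1`, so that `n ≤ p ^ s`. The letter `wp p i = firstDigit p (i + 1)` only depends on
`(i + 1) % p ^ s` as long as `p ^ s ∤ i + 1`, and among `n ≤ p ^ s` consecutive integers at most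
one is a multiple of `p ^ s`. If there is none, reduce the starting position modulo `p ^ s`;
otherwise move that multiple to `d * p ^ s`, where `d < p` is its own first digit, which keeps all
residues modulo `p ^ s` and lands before `p ^ n`. Hence a word of length `n` is a factor of `w_p`
iff it occurs before `p ^ n`, a bounded search over a primitive recursive sequence.
-/

section FirstDigit

variable {p : ℕ}

theorem firstDigit_eq_divMaxPow_mod (hp : 1 < p) (n : ℕ) :
    firstDigit p n = n.divMaxPow p % p := by
  rw [firstDigit, Nat.div_eq_of_eq_mul_left (Nat.pow_pos (by omega))
    (Nat.divMaxPow_mul_pow_padicValNat p n).symm]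

theorem firstDigit_pow_mul (hp : 1 < p) {q : ℕ} (hq : ¬p ∣ q) (k : ℕ) :
    firstDigit p (p ^ k * q) = q % p := by
  have hq0 : q ≠ 0 := by rintro rfl; exact hq (dvd_zero p)
  have h := Nat.maxPowDvdDiv_of_pow_mul_eq (mul_ne_zero (pow_ne_zero k (by omega)) hq0) rfl hq
  rw [firstDigit_eq_divMaxPow_mod hp, Nat.divMaxPow, h]

theorem firstDigit_ne_zero (hp : 1 < p) {n : ℕ} (hn : n ≠ 0) : firstDigit p n ≠ 0 := by
  rw [firstDigit_eq_divMaxPow_mod hp]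
  exact fun h => Nat.not_dvd_divMaxPow hp hn (Nat.dvd_of_mod_eq_zero h)

theorem firstDigit_add_pow_mul (hp : 1 < p) {s a : ℕ} (ha : ¬p ^ s ∣ a) (b : ℕ) :
    firstDigit p (a + p ^ s * b) = firstDigit p a := by
  have ha0 : a ≠ 0 := by rintro rfl; exact ha (dvd_zero _)
  have hvs : padicValNat p a < s := by
    by_contra! h
    exact ha ((Nat.pow_dvd_iff_le_padicValNat (by omega) ha0).2 h)
  have hq : ¬p ∣ a.divMaxPow p := Nat.not_dvd_divMaxPow hp ha0
  have hpb : p ∣ p ^ (s - padicValNat p a) * b := (dvd_pow_self p (by omega)).mul_right b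
  have hsplit : a + p ^ s * b =
      p ^ padicValNat p a * (a.divMaxPow p + p ^ (s - padicValNat p a) * b) := by
    rw [mul_add, ← mul_assoc, ← pow_add, Nat.add_sub_cancel' hvs.le,
      Nat.pow_padicValNat_mul_divMaxPow]
  rw [hsplit, firstDigit_pow_mul hp ((Nat.dvd_add_left hpb).not.2 hq)]
  conv_rhs => rw [← Nat.pow_padicValNat_mul_divMaxPow p a, firstDigit_pow_mul hp hq]
  exact (Nat.modEq_zero_iff_dvd.2 hpb).add_left (a.divMaxPow p)

theorem firstDigit_mod_pow (hp : 1 < p) {s n : ℕ} (hn : ¬p ^ s ∣ n) :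
    firstDigit p (n % p ^ s) = firstDigit p n := by
  conv_rhs => rw [← Nat.mod_add_div n (p ^ s)]
  exact (firstDigit_add_pow_mul hp (by rwa [Nat.dvd_mod_iff dvd_rfl]) _).symm

theorem firstDigit_eq_of_modEq (hp : 1 < p) {s a b : ℕ} (h : a ≡ b [MOD p ^ s])
    (ha : ¬p ^ s ∣ a) : firstDigit p a = firstDigit p b := by
  rw [← firstDigit_mod_pow hp ha, ← firstDigit_mod_pow hp ((h.dvd_iff dvd_rfl).not.1 ha)]
  exact congrArg (firstDigit p) h

end FirstDigit

section Word

variable {p : ℕ}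

theorem wp_add_eq_of_modEq (hp : 1 < p) {s m m' : ℕ} (h : m ≡ m' [MOD p ^ s]) {j : ℕ}
    (hj : ¬p ^ s ∣ m + j + 1) : wp p (m + j) = wp p (m' + j) :=
  firstDigit_eq_of_modEq hp (h.add_right (j + 1)) hj

theorem exists_lt_pow_forall_wp_add_eq (hp : 1 < p) (m n : ℕ) :
    ∃ m' < p ^ n, ∀ j < n, wp p (m + j) = wp p (m' + j) := by
  set s := n - 1
  have hns : n ≤ p ^ s := by have := Nat.lt_pow_self (n := s) hp; omega
  by_cases hdiv : ∃ j₀ < n, p ^ s ∣ m + j₀ + 1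
  · obtain ⟨j₀, hj₀, hdvd⟩ := hdiv
    set d := wp p (m + j₀)
    have hd0 : 0 < d := Nat.pos_of_ne_zero (firstDigit_ne_zero hp (by omega))
    have hdp : d < p := Nat.mod_lt _ (by omega)
    obtain ⟨m', hm'⟩ : ∃ m', m' + j₀ + 1 = p ^ s * d :=
      ⟨p ^ s * d - (j₀ + 1), by have := Nat.le_mul_of_pos_right (p ^ s) hd0; omega⟩
    have hpn : p ^ n = p ^ s * p := by rw [← pow_succ]; congr 1; omega
    have hmod : m ≡ m' [MOD p ^ s] :=
      (((Nat.modEq_zero_iff_dvd.2 hdvd).trans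
        (Nat.modEq_zero_iff_dvd.2 ⟨d, hm'⟩).symm).add_right_cancel' 1).add_right_cancel' j₀
    refine ⟨m', by nlinarith, fun j hj => ?_⟩
    by_cases hjj : j = j₀
    · subst hjj
      change d = firstDigit p (m' + j + 1)
      rw [hm', firstDigit_pow_mul hp (Nat.not_dvd_of_pos_of_lt hd0 hdp), Nat.mod_eq_of_lt hdp]
    · refine wp_add_eq_of_modEq hp hmod fun hj' => hjj ?_
      have hjj₀ : m + j + 1 ≡ m + j₀ + 1 [MOD p ^ s] :=
        (Nat.modEq_zero_iff_dvd.2 hj').trans (Nat.modEq_zero_iff_dvd.2 hdvd).symm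
      exact ((hjj₀.add_right_cancel' 1).add_left_cancel' m).eq_of_lt_of_lt (by omega) (by omega)
  · refine ⟨m % p ^ s, (Nat.mod_lt _ (Nat.pow_pos (by omega))).trans_le
      (Nat.pow_le_pow_right (by omega) (by omega)), fun j hj => ?_⟩
    exact wp_add_eq_of_modEq hp (Nat.mod_modEq m _).symm fun h => hdiv ⟨j, hj, h⟩

theorem exists_occursAtW_iff_exists_lt_pow (hp : 1 < p) (w : List ℕ) :
    (∃ i, OccursAtW p w i) ↔ ∃ i < p ^ w.length, OccursAtW p w i := by
  refine ⟨fun ⟨i, hi⟩ => ?_, fun ⟨i, _, hi⟩ => ⟨i, hi⟩⟩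
  obtain ⟨m', hm', heq⟩ := exists_lt_pow_forall_wp_add_eq hp i w.length
  exact ⟨m', hm', fun j => (heq j j.isLt).symm.trans (hi j)⟩

theorem occursAtW_iff_getD {w : List ℕ} {i : ℕ} :
    OccursAtW p w i ↔ ∀ j < w.length, wp p (i + j) = w.getD j 0 := by
  refine ⟨fun h j hj => ?_, fun h j => ?_⟩
  · rw [List.getD_eq_getElem _ _ hj]
    exact h ⟨j, hj⟩
  · rw [List.get_eq_getElem, ← List.getD_eq_getElem _ 0 j.isLt]
    exact h j j.isLt

end Word

section Computability

open Primrec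

theorem primrec₂_nat_pow : Primrec₂ ((· ^ ·) : ℕ → ℕ → ℕ) :=
  Primrec₂.unpaired'.1 Nat.Primrec.pow

variable {p : ℕ}

theorem padicValNat_eq_findGreatest (hp : p ≠ 1) (n : ℕ) :
    padicValNat p n = Nat.findGreatest (fun v => p ^ v ∣ n) n := by
  rcases eq_or_ne n 0 with rfl | hn
  · simp
  refine ((Nat.findGreatest_eq_iff (P := fun v => p ^ v ∣ n)).2
    ⟨Nat.padicValNat_le_self n, fun _ => pow_padicValNat_dvd, fun k hk _ hdvd => ?_⟩).symm
  exact absurd ((Nat.pow_dvd_iff_le_padicValNat hp hn).1 hdvd) (by omega)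

theorem primrec_padicValNat (hp : p ≠ 1) : Primrec (padicValNat p) := by
  have hdvd : PrimrecRel fun n v : ℕ => p ^ v ∣ n :=
    (Primrec.eq.comp (nat_mod.comp fst (primrec₂_nat_pow.comp (const p) snd)) (const 0)).of_eq
      fun _ => Nat.dvd_iff_mod_eq_zero.symm
  exact (nat_findGreatest Primrec.id hdvd).of_eq fun n => (padicValNat_eq_findGreatest hp n).symm

theorem primrec_wp (hp : p ≠ 1) : Primrec (wp p) :=
  nat_mod.comp (nat_div.comp succ (primrec₂_nat_pow.comp (const p)
    ((primrec_padicValNat hp).comp succ))) (const p)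

theorem primrecPred_exists_lt_pow_occursAtW (hp : p ≠ 1) :
    PrimrecPred fun w : List ℕ => ∃ i < p ^ w.length, OccursAtW p w i := by
  have hletter : PrimrecRel fun (j : ℕ) (a : ℕ × List ℕ) => wp p (a.1 + j) = a.2.getD j 0 :=
    Primrec.eq.comp ((primrec_wp hp).comp (nat_add.comp (fst.comp snd) fst))
      ((list_getD 0).comp (snd.comp snd) fst)
  have hocc : PrimrecRel fun (i : ℕ) (w : List ℕ) => OccursAtW p w i :=
    (hletter.forall_mem_list.comp (list_range.comp (list_length.comp snd)) Primrec.id).of_eq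
      fun _ => by simp only [List.mem_range, id, occursAtW_iff_getD]
  exact (hocc.exists_mem_list.comp (list_range.comp
    (primrec₂_nat_pow.comp (const p) list_length)) Primrec.id).of_eq
      fun _ => by simp only [List.mem_range, id]

end Computability

/-- Every length-`n` factor of a configuration of `X_p` already occurs in `w_p` at some
position `< p^n`; consequently the factor language of `X_p` is decidable, so `X_p` is an
effective subshift. -/
theorem stmt10 (p : ℕ) (hp : 2 ≤ p) :
    (∀ c ∈ Xp p, ∀ (i : ℤ) (n : ℕ),
      ∃ m : ℕ, m < p ^ n ∧ ∀ j : ℕ, j < n → c (i + (j : ℕ)) = wp p (m + j)) ∧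
    ComputablePred (fun w : List ℕ => ∃ i : ℕ, OccursAtW p w i) := by
  refine ⟨fun c hc i n => ?_, ?_⟩
  · obtain ⟨m, hm⟩ := hc i n
    obtain ⟨m', hm', heq⟩ := exists_lt_pow_forall_wp_add_eq hp m n
    exact ⟨m', hm', fun j hj => (hm j hj).trans (heq j hj)⟩
  · exact ((primrecPred_exists_lt_pow_occursAtW (by omega)).of_eq
      fun w => (exists_occursAtW_iff_exists_lt_pow hp w).symm).computablePred
end

section
/- If X_1 ⊆ Σ_1^Z and X_2 ⊆ Σ_2^Z are minimal subshifts such that for all configurations c_1 ∈ X_1, c_2 ∈ X_2 and all words u_1 in the language of X_1 and u_2 in the language of X_2 of equal length, u_1 appears periodically in c_1 with some period q_1 and u_2 appears periodically in c_2 with some period q_2 with gcd(q_1,q_2)=1, then the product subshift X_1 ⊗ X_2 is minimal. -/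
/-- `w` occurs periodically in `c` with period `q`: there is a position `i` such that `w`
occurs at every position `i + j * q`, `j ∈ ℤ`. -/
def OccursPeriodically {α : Type*} (w : List α) (c : ℤ → α) (q : ℕ) : Prop :=
  ∃ i : ℤ, ∀ j : ℤ, OccursAt w c (i + j * (q : ℤ))

/-- The product of two sets of configurations. -/
def ProdShift {α β : Type*} (X : Set (ℤ → α)) (Y : Set (ℤ → β)) : Set (ℤ → α × β) :=
  {c | (fun i => (c i).1) ∈ X ∧ (fun i => (c i).2) ∈ Y}

theorem OccursAt.map {α γ : Type*} {w : List α} {c : ℤ → α} {i : ℤ} (f : α → γ)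
    (h : OccursAt w c i) : OccursAt (w.map f) (f ∘ c) i := by
  intro j
  simpa using congrArg f (h ⟨j, by simpa using j.2⟩)

theorem occursAt_prod_iff {α β : Type*} {w : List (α × β)} {c : ℤ → α × β} {i : ℤ} :
    OccursAt w c i ↔
      OccursAt (w.map Prod.fst) (Prod.fst ∘ c) i ∧ OccursAt (w.map Prod.snd) (Prod.snd ∘ c) i := by
  refine ⟨fun h => ⟨h.map _, h.map _⟩, fun ⟨h₁, h₂⟩ j => Prod.ext ?_ ?_⟩
  · simpa using h₁ ⟨j, by simp⟩
  · simpa using h₂ ⟨j, by simp⟩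

theorem InLang.map {α γ : Type*} {X : Set (ℤ → α)} {Y : Set (ℤ → γ)} {w : List α} (f : α → γ)
    (hXY : ∀ c ∈ X, f ∘ c ∈ Y) (hw : InLang X w) : InLang Y (w.map f) := by
  obtain ⟨c, hc, i, hi⟩ := hw
  exact ⟨f ∘ c, hXY c hc, i, hi.map f⟩

theorem exists_add_mul_eq_add_mul_of_coprime {q₁ q₂ : ℕ} (hq : Nat.Coprime q₁ q₂) (i₁ i₂ : ℤ) :
    ∃ j₁ j₂ : ℤ, i₁ + j₁ * q₁ = i₂ + j₂ * q₂ := by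
  obtain ⟨a, b, hab⟩ := Nat.isCoprime_iff_coprime.2 hq
  exact ⟨a * (i₂ - i₁), -(b * (i₂ - i₁)), by linear_combination (i₂ - i₁) * hab⟩

theorem OccursPeriodically.exists_common_occurrence {α β : Type*} {u₁ : List α} {u₂ : List β}
    {c₁ : ℤ → α} {c₂ : ℤ → β} {q₁ q₂ : ℕ} (hq : Nat.Coprime q₁ q₂)
    (h₁ : OccursPeriodically u₁ c₁ q₁) (h₂ : OccursPeriodically u₂ c₂ q₂) :
    ∃ i, OccursAt u₁ c₁ i ∧ OccursAt u₂ c₂ i := by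
  obtain ⟨i₁, hi₁⟩ := h₁
  obtain ⟨i₂, hi₂⟩ := h₂
  obtain ⟨j₁, j₂, hj⟩ := exists_add_mul_eq_add_mul_of_coprime hq i₁ i₂
  exact ⟨i₁ + j₁ * q₁, hi₁ j₁, hj ▸ hi₂ j₂⟩

theorem stmt12_general {α β : Type}
    (X₁ : Set (ℤ → α)) (X₂ : Set (ℤ → β))
    (hper : ∀ c₁ ∈ X₁, ∀ c₂ ∈ X₂, ∀ (u₁ : List α) (u₂ : List β),
      InLang X₁ u₁ → InLang X₂ u₂ → u₁.length = u₂.length →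
        ∃ q₁ q₂ : ℕ, 0 < q₁ ∧ 0 < q₂ ∧ Nat.gcd q₁ q₂ = 1 ∧
          OccursPeriodically u₁ c₁ q₁ ∧ OccursPeriodically u₂ c₂ q₂) :
    MinimalLang (ProdShift X₁ X₂) := by
  intro w hw c hc
  obtain ⟨q₁, q₂, -, -, hq, hp₁, hp₂⟩ :=
    hper _ hc.1 _ hc.2 (w.map Prod.fst) (w.map Prod.snd)
      (hw.map Prod.fst fun _ hc' => hc'.1) (hw.map Prod.snd fun _ hc' => hc'.2) (by simp)
  obtain ⟨i, hi₁, hi₂⟩ := hp₁.exists_common_occurrence hq hp₂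
  exact ⟨i, occursAt_prod_iff.2 ⟨hi₁, hi₂⟩⟩

/-- If `X₁`, `X₂` are minimal subshifts such that equal-length words of their languages
occur periodically in every configuration with coprime periods, then the product
subshift `X₁ ⊗ X₂` is minimal. -/
theorem stmt12 {α β : Type} [Fintype α] [Fintype β]
    (X₁ : Set (ℤ → α)) (X₂ : Set (ℤ → β))
    (h₁ : IsSubshift X₁) (h₂ : IsSubshift X₂)
    (hmin₁ : MinimalLang X₁) (hmin₂ : MinimalLang X₂)
    (hper : ∀ c₁ ∈ X₁, ∀ c₂ ∈ X₂, ∀ (u₁ : List α) (u₂ : List β),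
      InLang X₁ u₁ → InLang X₂ u₂ → u₁.length = u₂.length →
        ∃ q₁ q₂ : ℕ, 0 < q₁ ∧ 0 < q₂ ∧ Nat.gcd q₁ q₂ = 1 ∧
          OccursPeriodically u₁ c₁ q₁ ∧ OccursPeriodically u₂ c₂ q₂) :
    MinimalLang (ProdShift X₁ X₂) :=
  stmt12_general X₁ X₂ hper
end

section
/- Define f_8 on words u ∈ {5,6,7}*{1,2,3,4} recursively: if |u|=1 then f_8(u)=u; if u = x·u' with v = f_8(u') of length n, then f_8(u) is the word 'x..7 v_1 1234567 v_2 1234567 ... v_n 1234...(x-1)', i.e. the letters x, ..., 7, then v_1, 1234567, v_2, 1234567, ..., v_n, followed by 1, ..., x-1 (e.g. for x=5: 567 v_1 1234567 v_2 ... v_n 1234). Then for distinct words u ≠ u' in {5,6,7}*{1,2,3,4}, neither of f_8(u), f_8(u') is a prefix of the other, and |f_8(u)| = 8^{|u|-1}. -/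
def f8 : List ℕ → List ℕ
  | [] => []
  | [a] => [a]
  | x :: b :: u' =>
      let v := f8 (b :: u')
      let body := (v.map (fun d => d :: [1, 2, 3, 4, 5, 6, 7])).flatten
      ((List.range (8 - x)).map (fun i => x + i)) ++ body.take (body.length - (8 - x))

def ValidWord (u : List ℕ) : Prop :=
  ∃ (w : List ℕ) (a : ℕ), u = w ++ [a] ∧
    (∀ x ∈ w, x = 5 ∨ x = 6 ∨ x = 7) ∧ (a = 1 ∨ a = 2 ∨ a = 3 ∨ a = 4)

namespace Stmt14Aux

abbrev g : ℕ → List ℕ := fun d => d :: [1, 2, 3, 4, 5, 6, 7]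

lemma f8_cons (x b : ℕ) (r : List ℕ) : f8 (x :: b :: r) =
    ((List.range (8 - x)).map (fun i => x + i)) ++
      (((f8 (b::r)).map g).flatten).take ((((f8 (b::r)).map g).flatten).length - (8 - x)) := by
  rw [f8]

lemma valid_ne_nil {u : List ℕ} (h : ValidWord u) : u ≠ [] := by
  obtain ⟨w, a, rfl, -, -⟩ := h; simp

lemma valid_single {a : ℕ} (h : ValidWord [a]) : a = 1 ∨ a = 2 ∨ a = 3 ∨ a = 4 := by
  obtain ⟨w, a', he, -, ha⟩ := h
  rcases w with _ | ⟨y, w⟩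
  · simp at he; omega
  · simp at he

lemma valid_rec {x b : ℕ} {r : List ℕ} (h : ValidWord (x :: b :: r)) :
    (x = 5 ∨ x = 6 ∨ x = 7) ∧ ValidWord (b :: r) := by
  obtain ⟨w, a, he, hw, ha⟩ := h
  rcases w with _ | ⟨y, w⟩
  · exact absurd (congrArg List.length he) (by simp)
  · simp at he
    obtain ⟨rfl, he2⟩ := he
    refine ⟨hw x (by simp), w, a, he2, fun z hz => hw z (by simp [hz]), ha⟩

lemma flatten_len (v : List ℕ) : ((v.map g).flatten).length = 8 * v.length := by
  induction v with
  | nil => simp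
  | cons d v ih => simp [ih, g]; omega

lemma f8_len : ∀ u : List ℕ, ValidWord u → (f8 u).length = 8 ^ (u.length - 1) := by
  intro u
  induction u with
  | nil => intro h; exact absurd rfl (valid_ne_nil h)
  | cons x tu ih =>
    intro h
    rcases tu with _ | ⟨b, r⟩
    · rw [f8]; simp
    · obtain ⟨hx, hv⟩ := valid_rec h
      have hn := ih hv
      have hn1 : 1 ≤ (f8 (b :: r)).length := hn ▸ Nat.one_le_pow _ _ (by norm_num)
      rw [f8_cons]
      simp only [List.length_append, List.length_map, List.length_range,
        List.length_take, flatten_len]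
      have : 8 ^ ((x :: b :: r).length - 1) = 8 * 8 ^ ((b :: r).length - 1) := by
        simp [pow_succ]; ring
      rw [this, ← hn]
      omega

lemma body_get? : ∀ (v : List ℕ) (i : ℕ), i < v.length →
    ((v.map g).flatten)[8 * i]? = v[i]? := by
  intro v
  induction v with
  | nil => simp
  | cons d v ih =>
    intro i hi
    rcases i with _ | i
    · simp [g]
    · rw [List.map_cons, List.flatten_cons,
        List.getElem?_append_right (by show (g d).length ≤ _; simp only [g, List.length_cons, List.length_nil]; omega)]
      have h1 : 8 * (i + 1) - (g d).length = 8 * i := by simp only [g, List.length_cons, List.length_nil]; omega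
      rw [h1, ih i (by simpa using hi)]
      simp

lemma f8_head (x b : ℕ) (r : List ℕ) (hx : x = 5 ∨ x = 6 ∨ x = 7) :
    (f8 (x :: b :: r))[0]? = some x := by
  rw [f8_cons, List.getElem?_append_left (by simp only [List.length_map, List.length_range]; omega), List.getElem?_map,
    List.getElem?_range (by omega)]
  simp

lemma prefix_head {l₁ l₂ : List ℕ} (h : l₁ <+: l₂) {a : ℕ} (ha : l₁[0]? = some a) :
    l₂[0]? = some a := by
  obtain ⟨t, rfl⟩ := h
  rw [List.getElem?_append_left, ha]
  cases l₁
  · simp at ha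
  · simp

lemma pf : ∀ u : List ℕ, ValidWord u → ∀ u' : List ℕ, ValidWord u' → u ≠ u' →
    ¬ (f8 u <+: f8 u') := by
  intro u
  induction u with
  | nil => intro h; exact absurd rfl (valid_ne_nil h)
  | cons x tu ih =>
    intro hu u' hu' hne hpre
    rcases u' with _ | ⟨x', tu'⟩
    · exact absurd rfl (valid_ne_nil hu')
    rcases tu with _ | ⟨b, r⟩ <;> rcases tu' with _ | ⟨b', r'⟩
    · -- both singletons
      have hx := valid_single hu
      rw [f8, f8] at hpre
      have h := List.prefix_iff_eq_take.mp hpre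
      simp at h
      exact hne (by rw [h])
    · -- u = [x] (x ∈ 1..4), u' long
      have hx := valid_single hu
      have hx' := (valid_rec hu').1
      have h1 : (f8 [x])[0]? = some x := by rw [f8]; simp
      have h2 := prefix_head hpre h1
      rw [f8_head x' b' r' hx'] at h2
      simp at h2
      omega
    · -- u long, u' = [x']: length contradiction
      have hl1 := f8_len _ hu
      have hl2 := f8_len _ hu'
      have e1 : ((x :: b :: r).length - 1) = r.length + 1 := by simp
      have e2 : (([x'] : List ℕ).length - 1) = 0 := by simp
      rw [e1] at hl1
      rw [e2, pow_zero] at hl2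
      have hle := hpre.length_le
      rw [hl1, hl2] at hle
      have h8 : (8:ℕ)^1 ≤ 8 ^ (r.length + 1) := Nat.pow_le_pow_right (by norm_num) (by omega)
      norm_num at h8
      omega
    · -- both long
      have hx := (valid_rec hu).1
      have hx' := (valid_rec hu').1
      have hvt : ValidWord (b :: r) := (valid_rec hu).2
      have hvt' : ValidWord (b' :: r') := (valid_rec hu').2
      -- heads equal
      have h2 := prefix_head hpre (f8_head x b r hx)
      rw [f8_head x' b' r' hx'] at h2
      have hxx : x = x' := by simpa using h2.symm
      subst hxx
      set v := f8 (b :: r) with hv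
      set v' := f8 (b' :: r') with hv'
      set c := 8 - x with hc
      have hc3 : 1 ≤ c ∧ c ≤ 3 := by omega
      have hn1 : 1 ≤ v.length := (f8_len _ hvt) ▸ Nat.one_le_pow _ _ (by norm_num)
      have hn1' : 1 ≤ v'.length := (f8_len _ hvt') ▸ Nat.one_le_pow _ _ (by norm_num)
      rw [f8_cons, f8_cons, List.prefix_append_right_inj] at hpre
      set A := ((v.map g).flatten).take (((v.map g).flatten).length - c) with hA
      set A' := ((v'.map g).flatten).take (((v'.map g).flatten).length - c) with hA'
      have hAl : A.length = 8 * v.length - c := by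
        rw [hA, List.length_take, flatten_len]; omega
      have hAl' : A'.length = 8 * v'.length - c := by
        rw [hA', List.length_take, flatten_len]; omega
      have hle := hpre.length_le
      rw [hAl, hAl'] at hle
      have hnn : v.length ≤ v'.length := by omega
      -- v = v'.take v.length
      have hkey : v = v'.take v.length := by
        apply List.ext_getElem?
        intro i
        by_cases hi : i < v.length
        · have hi' : i < v'.length := lt_of_lt_of_le hi hnn
          have e1 : v[i]? = A[8 * i]? := by
            rw [hA, List.getElem?_take, if_pos (by rw [flatten_len]; omega),
              body_get? v i hi]
          have e2 : A[8 * i]? = A'[8 * i]? := by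
            obtain ⟨t, ht⟩ := hpre
            rw [← ht, List.getElem?_append_left (by rw [hAl]; omega)]
          have e3 : A'[8 * i]? = v'[i]? := by
            rw [hA', List.getElem?_take, if_pos (by rw [flatten_len]; omega),
              body_get? v' i hi']
          rw [e1, e2, e3, List.getElem?_take, if_pos hi]
        · rw [List.getElem?_eq_none (by omega), List.getElem?_eq_none (by simp; omega)]
      have hvpre : v <+: v' := hkey ▸ List.take_prefix _ _
      have htne : (b :: r) ≠ (b' :: r') := fun he => hne (by rw [he])
      exact ih hvt _ hvt' htne hvpre

end Stmt14Aux

/-- For distinct words in `{5,6,7}*{1,2,3,4}`, neither image under `f₈` is a prefix of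
the other, and `|f₈(u)| = 8^(|u|-1)`. -/
theorem stmt14 :
    (∀ u u' : List ℕ, ValidWord u → ValidWord u' → u ≠ u' → ¬ (f8 u <+: f8 u')) ∧
    (∀ u : List ℕ, ValidWord u → (f8 u).length = 8 ^ (u.length - 1)) :=
  ⟨fun u u' hu hu' hne => Stmt14Aux.pf u hu u' hu' hne, Stmt14Aux.f8_len⟩
end
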